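/- arXiv:1602.05823 — 2 statements merged into one kernel-verified Lean document; each statement's English description precedes it below -/
import Mathlib

section
/- For s ≥ 2 with s ≤ 2^{d+1}, K_T(s) satisfies s^{log3/log2}/3 ≤ K_T(s) ≤ s^{log3/log2}, where K_T(s) is the supremum of Σ_{ν∈Λ} 2^{‖ν‖₀} over lower sets Λ ⊂ ℕ₀^d with #Λ = s. -/
/-- `K_T(s)`: the supremum of `∑_{ν ∈ Λ} 2 ^ ‖ν‖₀` over lower sets
`Λ ⊂ ℕ₀^d` of cardinality `s`. -/
noncomputable def KT (d s : ℕ) : ℕ :=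
  sSup {t : ℕ | ∃ Λ : Finset (Fin d → ℕ),
    (∀ ν ∈ Λ, ∀ μ : Fin d → ℕ, (∀ k, μ k ≤ ν k) → μ ∈ Λ) ∧ Λ.card = s ∧
    t = ∑ ν ∈ Λ, 2 ^ (Finset.univ.filter (fun k => ν k ≠ 0)).card}

/-!
Upper bound: the slices `Λⱼ = {μ | (j, μ) ∈ Λ}` of a lower set `Λ ⊂ ℕ^(d+1)` are lower sets
`Λ₀ ⊇ Λ₁ ⊇ ⋯` in `ℕ^d` with `#Λ = ∑ⱼ #Λⱼ` and `K_T(Λ) = K_T(Λ₀) + 2 ∑_{j ≥ 1} K_T(Λⱼ)`. By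
induction on `d` everything reduces to `a ^ α + 2 b ^ α ≤ (a + b) ^ α` for `0 ≤ b ≤ a`, which holds
because `2 ^ α = 3` makes it an equality at `b = 0` and at `b = a`, and `x ↦ x ^ α` is convex.

Lower bound: if `2 ^ d' < s ≤ 2 ^ (d' + 1)`, the box `{0,1}^d' × {0}^(d-d')` has `2 ^ d'` points
and weight `3 ^ d' ≥ s ^ α / 3`; it is enlarged to a lower set of cardinality `s` by repeatedly
adding a minimal point of its complement.
-/

open Finset

theorem rpow_add_two_mul_rpow_le {p : ℝ} (hp1 : 1 ≤ p) (hp : 3 ≤ (2 : ℝ) ^ p) {a b : ℝ}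
    (hb : 0 ≤ b) (hba : b ≤ a) : a ^ p + 2 * b ^ p ≤ (a + b) ^ p := by
  have hp0 : p ≠ 0 := by linarith
  obtain rfl | ha := (hb.trans hba).eq_or_lt
  · obtain rfl : b = 0 := le_antisymm hba hb
    simp [Real.zero_rpow hp0]
  set c := a + b
  have hc : 0 < c := by positivity
  set θ := (a - b) / c
  have hθc : θ * c = a - b := div_mul_cancel₀ _ hc.ne'
  have hθ : 0 ≤ θ := div_nonneg (by linarith) hc.le
  have hθ' : 0 ≤ 1 - θ := by
    rw [sub_nonneg, div_le_one hc]; linarith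
  -- `(a, b)` is the convex combination with weights `θ, 1 - θ` of `(c, 0)` and `(c / 2, c / 2)`
  have hjensen : ∀ x : ℝ, 0 ≤ x →
      (θ * x + (1 - θ) * (c / 2)) ^ p ≤ θ * x ^ p + (1 - θ) * (c / 2) ^ p := fun x hx => by
    simpa only [smul_eq_mul] using
      (convexOn_rpow hp1).2 (Set.mem_Ici.2 hx) (Set.mem_Ici.2 (by positivity)) hθ hθ' (by ring)
  have ha' := hjensen c hc.le
  have hb' := hjensen 0 le_rfl
  rw [show θ * c + (1 - θ) * (c / 2) = a by linarith] at ha'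
  rw [show θ * 0 + (1 - θ) * (c / 2) = b by linarith, Real.zero_rpow hp0] at hb'
  have h3 : 3 * (c / 2) ^ p ≤ c ^ p := by
    rw [Real.div_rpow hc.le zero_le_two, mul_div_assoc', div_le_iff₀ (by positivity), mul_comm]
    exact mul_le_mul_of_nonneg_left hp (by positivity)
  nlinarith

theorem rpow_add_two_mul_sum_rpow_le {ι : Type*} {p : ℝ} (hp1 : 1 ≤ p) (hp : 3 ≤ (2 : ℝ) ^ p)
    (A : Finset ι) {a : ℝ} {n : ι → ℝ} (hn : ∀ j ∈ A, 0 ≤ n j) (hna : ∀ j ∈ A, n j ≤ a) :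
    a ^ p + 2 * ∑ j ∈ A, n j ^ p ≤ (a + ∑ j ∈ A, n j) ^ p := by
  classical
  induction A using Finset.induction_on with
  | empty => simp
  | insert k A hk ih =>
    rw [forall_mem_insert] at hn hna
    have hA : a ≤ a + ∑ j ∈ A, n j := le_add_of_nonneg_right (sum_nonneg hn.2)
    calc a ^ p + 2 * ∑ j ∈ insert k A, n j ^ p
        = (a ^ p + 2 * ∑ j ∈ A, n j ^ p) + 2 * n k ^ p := by rw [sum_insert hk]; ring
      _ ≤ (a + ∑ j ∈ A, n j) ^ p + 2 * n k ^ p := by gcongr; exact ih hn.2 hna.2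
      _ ≤ (a + ∑ j ∈ A, n j + n k) ^ p :=
        rpow_add_two_mul_rpow_le hp1 hp hn.1 (hna.1.trans hA)
      _ = (a + ∑ j ∈ insert k A, n j) ^ p := by rw [sum_insert hk]; ring_nf

variable {d : ℕ}

def weight (ν : Fin d → ℕ) : ℕ := 2 ^ #{k | ν k ≠ 0}

-- the paper's `K_T(Λ)`
def weightSum (Λ : Finset (Fin d → ℕ)) : ℕ := ∑ ν ∈ Λ, weight ν

theorem weight_cons (j : ℕ) (μ : Fin d → ℕ) :
    weight (Fin.cons j μ : Fin (d + 1) → ℕ) = (if j = 0 then 1 else 2) * weight μ := by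
  simp only [weight, card_filter, Fin.sum_univ_succ, Fin.cons_zero, Fin.cons_succ, pow_add]
  split_ifs <;> simp_all

noncomputable def tailSlice (Λ : Finset (Fin (d + 1) → ℕ)) (j : ℕ) : Finset (Fin d → ℕ) :=
  Λ.preimage (Fin.cons (α := fun _ => ℕ) j) (Fin.cons_right_injective _).injOn

@[simp]
theorem mem_tailSlice {Λ : Finset (Fin (d + 1) → ℕ)} {j : ℕ} {μ : Fin d → ℕ} :
    μ ∈ tailSlice Λ j ↔ (Fin.cons j μ : Fin (d + 1) → ℕ) ∈ Λ :=
  mem_preimage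

theorem IsLowerSet.tailSlice {Λ : Finset (Fin (d + 1) → ℕ)}
    (hΛ : IsLowerSet (Λ : Set (Fin (d + 1) → ℕ))) (j : ℕ) :
    IsLowerSet (tailSlice Λ j : Set (Fin d → ℕ)) := fun _ _ hμ h =>
  mem_tailSlice.2 (hΛ (Fin.cons_le_cons.2 ⟨le_rfl, hμ⟩) (mem_tailSlice.1 h))

theorem tailSlice_subset_tailSlice {Λ : Finset (Fin (d + 1) → ℕ)}
    (hΛ : IsLowerSet (Λ : Set (Fin (d + 1) → ℕ))) {i j : ℕ} (hij : i ≤ j) :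
    tailSlice Λ j ⊆ tailSlice Λ i := fun _ h =>
  mem_tailSlice.2 (hΛ (Fin.cons_le_cons.2 ⟨hij, le_rfl⟩) (mem_tailSlice.1 h))

theorem sum_eq_sum_range_sum_tailSlice {M : Type*} [AddCommMonoid M]
    (Λ : Finset (Fin (d + 1) → ℕ)) {N : ℕ} (hN : ∀ ν ∈ Λ, ν 0 < N) (f : (Fin (d + 1) → ℕ) → M) :
    ∑ ν ∈ Λ, f ν = ∑ j ∈ range N, ∑ μ ∈ tailSlice Λ j, f (Fin.cons j μ) := by
  rw [← sum_fiberwise_of_maps_to (g := fun ν => ν 0) (t := range N) (by simpa using hN)]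
  refine sum_congr rfl fun j _ => ?_
  rw [sum_filter, ← sum_preimage (Fin.cons j) Λ (Fin.cons_right_injective (α := fun _ => ℕ) j).injOn
    fun ν => if ν 0 = j then f ν else 0]
  · simp [tailSlice]
  · rintro ν - hν
    rw [if_neg]
    rintro rfl
    exact hν ⟨Fin.tail ν, Fin.cons_self_tail ν⟩

theorem card_eq_card_tailSlice_add {Λ : Finset (Fin (d + 1) → ℕ)} {J : ℕ}
    (hJ : ∀ ν ∈ Λ, ν 0 < J + 1) :
    #Λ = #(tailSlice Λ 0) + ∑ j ∈ range J, #(tailSlice Λ (j + 1)) := by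
  simp only [card_eq_sum_ones, sum_eq_sum_range_sum_tailSlice Λ hJ, sum_range_succ', add_comm]

theorem weightSum_eq_weightSum_tailSlice_add {Λ : Finset (Fin (d + 1) → ℕ)} {J : ℕ}
    (hJ : ∀ ν ∈ Λ, ν 0 < J + 1) :
    weightSum Λ =
      weightSum (tailSlice Λ 0) + 2 * ∑ j ∈ range J, weightSum (tailSlice Λ (j + 1)) := by
  simp only [weightSum, sum_eq_sum_range_sum_tailSlice Λ hJ, sum_range_succ', weight_cons,
    if_pos, Nat.succ_ne_zero, if_false, one_mul, mul_sum, add_comm]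

theorem weightSum_le_card_rpow {p : ℝ} (hp1 : 1 ≤ p) (hp : 3 ≤ (2 : ℝ) ^ p) :
    ∀ {d : ℕ} (Λ : Finset (Fin d → ℕ)), IsLowerSet (Λ : Set (Fin d → ℕ)) →
      (weightSum Λ : ℝ) ≤ (#Λ : ℝ) ^ p
  | 0, Λ, _ => by
    have hw : weightSum Λ = #Λ := by simp [weightSum, weight]
    rcases Nat.eq_zero_or_pos #Λ with h | h
    · rw [hw, h, Nat.cast_zero]; exact Real.rpow_nonneg le_rfl p
    · rw [hw]; exact Real.self_le_rpow_of_one_le (by exact_mod_cast h) hp1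
  | d + 1, Λ, hΛ => by
    set J := Λ.sup (· 0)
    have hJ : ∀ ν ∈ Λ, ν 0 < J + 1 := fun _ hν => Nat.lt_succ_of_le (le_sup (f := (· 0)) hν)
    have ih (j : ℕ) : (weightSum (tailSlice Λ j) : ℝ) ≤ (#(tailSlice Λ j) : ℝ) ^ p :=
      weightSum_le_card_rpow hp1 hp _ (hΛ.tailSlice j)
    rw [weightSum_eq_weightSum_tailSlice_add hJ, card_eq_card_tailSlice_add hJ]
    push_cast
    calc (weightSum (tailSlice Λ 0) : ℝ) + 2 * ∑ j ∈ range J, (weightSum (tailSlice Λ (j + 1)) : ℝ)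
        ≤ (#(tailSlice Λ 0) : ℝ) ^ p + 2 * ∑ j ∈ range J, (#(tailSlice Λ (j + 1)) : ℝ) ^ p := by
          gcongr with j
          · exact ih 0
          · exact ih (j + 1)
      _ ≤ _ := rpow_add_two_mul_sum_rpow_le hp1 hp _ (fun _ _ => Nat.cast_nonneg _)
          fun j _ => by
            exact_mod_cast card_le_card (tailSlice_subset_tailSlice hΛ (Nat.zero_le (j + 1)))

theorem weightSum_le_card_mul (Λ : Finset (Fin d → ℕ)) : weightSum Λ ≤ #Λ * 2 ^ d := by
  simpa [weightSum] using sum_le_card_nsmul Λ weight (2 ^ d) fun _ _ =>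
    Nat.pow_le_pow_right two_pos ((card_filter_le _ _).trans_eq (card_fin d))

theorem weightSum_mono {Λ Λ' : Finset (Fin d → ℕ)} (h : Λ ⊆ Λ') : weightSum Λ ≤ weightSum Λ' :=
  sum_le_sum_of_subset h

theorem card_Iic_pi (ν : Fin d → ℕ) : #(Iic ν) = ∏ k, (ν k + 1) := by
  simp [Pi.card_Iic]

theorem weightSum_Iic (ν : Fin d → ℕ) : weightSum (Iic ν) = ∏ k, (2 * ν k + 1) := by
  have hweight (μ : Fin d → ℕ) : weight μ = ∏ k, if μ k = 0 then 1 else 2 := by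
    rw [weight, ← prod_const, prod_filter]
    exact prod_congr rfl fun k _ => by split_ifs <;> simp_all
  have hline (n : ℕ) : ∑ j ∈ Iic n, (if j = 0 then 1 else 2) = 2 * n + 1 := by
    rw [← Nat.range_succ_eq_Iic, sum_range_succ']
    simp [mul_comm]
  simp only [weightSum, hweight]
  rw [show Iic ν = Fintype.piFinset fun k => Iic (ν k) from rfl,
    ← prod_univ_sum (fun k => Iic (ν k)) fun _ j => if j = 0 then 1 else 2]
  exact prod_congr rfl fun k _ => hline (ν k)

theorem isLowerSet_iff_forall_apply_le {ι : Type*} {π : ι → Type*} [∀ i, Preorder (π i)]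
    {s : Set (∀ i, π i)} : IsLowerSet s ↔ ∀ ν ∈ s, ∀ μ : ∀ i, π i, (∀ k, μ k ≤ ν k) → μ ∈ s :=
  ⟨fun h _ hν _ hμ => h hμ hν, fun h _ _ hμ hν => h _ hν _ hμ⟩

theorem KT_le_rpow {p : ℝ} (hp1 : 1 ≤ p) (hp : 3 ≤ (2 : ℝ) ^ p) (d s : ℕ) :
    (KT d s : ℝ) ≤ (s : ℝ) ^ p := by
  have : KT d s ≤ ⌊(s : ℝ) ^ p⌋₊ := csSup_le' <| by
    rintro _ ⟨Λ, hΛ, rfl, rfl⟩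
    exact Nat.le_floor (weightSum_le_card_rpow hp1 hp Λ (isLowerSet_iff_forall_apply_le.2 hΛ))
  exact (Nat.cast_le.2 this).trans (Nat.floor_le (by positivity))

theorem weightSum_le_KT {Λ : Finset (Fin d → ℕ)} (hΛ : IsLowerSet (Λ : Set (Fin d → ℕ))) :
    weightSum Λ ≤ KT d #Λ :=
  le_csSup ⟨#Λ * 2 ^ d, by rintro _ ⟨Λ', -, hcard, rfl⟩; exact hcard ▸ weightSum_le_card_mul Λ'⟩
    ⟨Λ, isLowerSet_iff_forall_apply_le.1 hΛ, rfl, rfl⟩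

section Extension

variable {α : Type*} [PartialOrder α] [WellFoundedLT α] [Infinite α]

theorem exists_notMem_isLowerSet_insert {s : Finset α} (hs : IsLowerSet (s : Set α)) :
    ∃ a ∉ s, IsLowerSet (insert a s : Set α) := by
  obtain ⟨a, ha, hmin⟩ := wellFounded_lt.has_min (s : Set α)ᶜ (Infinite.exists_notMem_finset s)
  refine ⟨a, ha, fun b c hcb hc => ?_⟩
  rcases hc with rfl | hc
  · rcases hcb.lt_or_eq with hlt | rfl
    · exact Or.inr (by_contra fun hb => hmin c hb hlt)
    · exact Or.inl rfl
  · exact Or.inr (hs hcb hc)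

theorem exists_isLowerSet_superset_card_eq {s : Finset α} (hs : IsLowerSet (s : Set α))
    {n : ℕ} (hn : #s ≤ n) : ∃ t, s ⊆ t ∧ IsLowerSet (t : Set α) ∧ #t = n := by
  classical
  induction n, hn using Nat.le_induction with
  | base => exact ⟨s, subset_rfl, hs, rfl⟩
  | succ n _ ih =>
    obtain ⟨t, hst, ht, rfl⟩ := ih
    obtain ⟨a, ha, hlower⟩ := exists_notMem_isLowerSet_insert ht
    exact ⟨insert a t, hst.trans (subset_insert a t), by simpa using hlower,
      card_insert_of_notMem ha⟩

end Extension

theorem three_pow_le_KT {d d' s : ℕ} (hd : 1 ≤ d) (hd' : d' ≤ d) (hs : 2 ^ d' ≤ s) :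
    3 ^ d' ≤ KT d s := by
  classical
  have : Nonempty (Fin d) := ⟨⟨0, hd⟩⟩
  obtain ⟨S, -, hS⟩ := exists_subset_card_eq (s := (univ : Finset (Fin d))) (by simpa using hd')
  set ν : Fin d → ℕ := fun k => if k ∈ S then 1 else 0
  have hcard : #(Iic ν) = 2 ^ d' := by
    simp [card_Iic_pi, ν, ite_add, hS]
  have hweight : weightSum (Iic ν) = 3 ^ d' := by
    simp [weightSum_Iic, ν, mul_ite, ite_add, hS]
  obtain ⟨Λ, hsub, hΛ, rfl⟩ :=
    exists_isLowerSet_superset_card_eq (coe_Iic ν ▸ isLowerSet_Iic ν) (hcard ▸ hs)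
  calc 3 ^ d' = weightSum (Iic ν) := hweight.symm
    _ ≤ weightSum Λ := weightSum_mono hsub
    _ ≤ KT d #Λ := weightSum_le_KT hΛ

theorem KT_sharp_bounds (d s : ℕ) (hd : 1 ≤ d) (hs2 : 2 ≤ s) (hs : s ≤ 2 ^ (d + 1)) :
    (s : ℝ) ^ (Real.log 3 / Real.log 2) / 3 ≤ (KT d s : ℝ) ∧
      (KT d s : ℝ) ≤ (s : ℝ) ^ (Real.log 3 / Real.log 2) := by
  set α := Real.log 3 / Real.log 2
  have hα : (2 : ℝ) ^ α = 3 := Real.rpow_logb (by norm_num) (by norm_num) (by norm_num)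
  have hα1 : 1 ≤ α := (Real.le_logb_iff_rpow_le one_lt_two (by norm_num)).2 (by norm_num)
  refine ⟨?_, KT_le_rpow hα1 hα.ge d s⟩
  obtain ⟨d', hlo, hhi⟩ : ∃ d', 2 ^ d' < s ∧ s ≤ 2 ^ (d' + 1) :=
    ⟨Nat.log 2 (s - 1), by have := Nat.pow_log_le_self 2 (by omega : s - 1 ≠ 0); omega,
      by have := Nat.lt_pow_succ_log_self one_lt_two (s - 1); omega⟩
  have hd' : d' ≤ d := by
    have := (Nat.pow_lt_pow_iff_right one_lt_two).1 (hlo.trans_le hs); omega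
  calc (s : ℝ) ^ α / 3 ≤ ((2 : ℝ) ^ (d' + 1)) ^ α / 3 := by gcongr; exact_mod_cast hhi
    _ = 3 ^ d' := by
      rw [← Real.rpow_pow_comm zero_le_two, hα, pow_succ, mul_div_cancel_right₀ _ three_ne_zero]
    _ ≤ KT d s := by exact_mod_cast three_pow_le_KT hd hd' hlo.le
end

section
/- For s ≥ 2 with s ≤ 2^{d+1}, K_L(s) satisfies s²/4 ≤ K_L(s) ≤ s², where K_L(s) is the supremum of Σ_{ν∈Λ} ∏_k(2ν_k+1) over lower sets Λ ⊂ ℕ₀^d with #Λ = s. -/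
/-!
In fact `K_L(s) = s²` as soon as `d ≥ 1`. For a lower set `Λ`, the number `∏_k (2 ν_k + 1)` counts
the pairs `(μ, μ')` with `μ ⊔ μ' = ν`; such pairs lie in `Λ × Λ` when `ν ∈ Λ`, and different `ν`
give disjoint sets of pairs, so the sum is at most `#Λ²`. The segment `{0, e₁, …, (s-1) e₁}`
attains this bound, since `∑_{j<s} (2j + 1) = s²`.
-/

/-- `K_L(s)`: the supremum of `∑_{ν ∈ Λ} ∏_k (2 ν_k + 1)` over lower sets
`Λ ⊂ ℕ₀^d` of cardinality `s`. -/
noncomputable def KL (d s : ℕ) : ℕ :=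
  sSup {t : ℕ | ∃ Λ : Finset (Fin d → ℕ),
    (∀ ν ∈ Λ, ∀ μ : Fin d → ℕ, (∀ k, μ k ≤ ν k) → μ ∈ Λ) ∧ Λ.card = s ∧
    t = ∑ ν ∈ Λ, ∏ k, (2 * ν k + 1)}

open Finset

theorem Nat.sum_range_two_mul_add_one (n : ℕ) : ∑ i ∈ range n, (2 * i + 1) = n ^ 2 := by
  induction n with
  | zero => simp
  | succ n ih => rw [sum_range_succ, ih]; ring

theorem Nat.card_filter_sup_eq (n : ℕ) : #{p ∈ Iic n ×ˢ Iic n | p.1 ⊔ p.2 = n} = 2 * n + 1 := by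
  have h : {p ∈ Iic n ×ˢ Iic n | p.1 ⊔ p.2 = n} = (Iic n ×ˢ {n}).disjUnion ({n} ×ˢ Iio n)
      (by simp [disjoint_left]; omega) := by
    ext ⟨a, b⟩
    simp only [mem_filter, mem_product, mem_Iic, mem_disjUnion, mem_singleton, mem_Iio]
    omega
  rw [h, card_disjUnion, card_product, card_product, Nat.card_Iic, Nat.card_Iio, card_singleton]
  ring

section

variable {ι : Type*} [DecidableEq ι]

def axisSegment (i : ι) (n : ℕ) : Finset (ι → ℕ) :=
  (range n).map ⟨Pi.single i, Pi.single_injective i⟩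

theorem card_axisSegment (i : ι) (n : ℕ) : #(axisSegment i n) = n := by
  simp [axisSegment]

theorem isLowerSet_axisSegment (i : ι) (n : ℕ) : IsLowerSet (axisSegment i n : Set (ι → ℕ)) := by
  intro a b hba ha
  simp only [axisSegment, coe_map, Function.Embedding.coeFn_mk, coe_range, Set.mem_image,
    Set.mem_Iio] at ha ⊢
  obtain ⟨j, hj, rfl⟩ := ha
  refine ⟨b i, (hba i).trans_lt (by simpa using hj), funext fun k => ?_⟩
  by_cases hk : k = i
  · subst hk; simp
  · rw [Pi.single_eq_of_ne hk]
    exact (by simpa [hk] using hba k : b k = 0).symm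

variable [Fintype ι]

theorem sum_axisSegment (i : ι) (n : ℕ) :
    ∑ ν ∈ axisSegment i n, ∏ k, (2 * ν k + 1) = n ^ 2 := by
  rw [axisSegment, sum_map, ← Nat.sum_range_two_mul_add_one]
  refine sum_congr rfl fun j _ => ?_
  rw [Fintype.prod_eq_single i fun k hk => by simp [hk]]
  simp

theorem card_filter_sup_eq (ν : ι → ℕ) :
    #{p ∈ Iic ν ×ˢ Iic ν | p.1 ⊔ p.2 = ν} = ∏ k, (2 * ν k + 1) := by
  simp_rw [← Nat.card_filter_sup_eq, ← Fintype.card_piFinset]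
  refine card_nbij' (fun p k => (p.1 k, p.2 k)) (fun f => (fun k => (f k).1, fun k => (f k).2))
    ?_ ?_ (fun _ _ => rfl) (fun _ _ => rfl) <;>
  · intro p hp
    simp_all [funext_iff, Pi.le_def]

theorem sum_prod_two_mul_add_one_le_card_sq {Λ : Finset (ι → ℕ)}
    (hΛ : IsLowerSet (Λ : Set (ι → ℕ))) : ∑ ν ∈ Λ, ∏ k, (2 * ν k + 1) ≤ #Λ ^ 2 :=
  calc ∑ ν ∈ Λ, ∏ k, (2 * ν k + 1)
      = ∑ ν ∈ Λ, #{p ∈ Λ ×ˢ Λ | p.1 ⊔ p.2 = ν} := by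
        refine sum_congr rfl fun ν hν => ?_
        rw [← card_filter_sup_eq]
        congr 1
        ext p
        simp only [mem_filter, mem_product, mem_Iic, and_congr_left_iff]
        rintro rfl
        exact ⟨fun h => ⟨hΛ h.1 hν, hΛ h.2 hν⟩, fun _ => ⟨le_sup_left, le_sup_right⟩⟩
    _ ≤ #(Λ ×ˢ Λ) := by
        rw [sum_card_fiberwise_eq_card_filter]
        exact card_filter_le _ _
    _ = #Λ ^ 2 := by rw [card_product, sq]

end

theorem KL_eq_sq {d : ℕ} (hd : 0 < d) (s : ℕ) : KL d s = s ^ 2 := by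
  have mem : s ^ 2 ∈ {t : ℕ | ∃ Λ : Finset (Fin d → ℕ),
      (∀ ν ∈ Λ, ∀ μ : Fin d → ℕ, (∀ k, μ k ≤ ν k) → μ ∈ Λ) ∧ Λ.card = s ∧
      t = ∑ ν ∈ Λ, ∏ k, (2 * ν k + 1)} :=
    ⟨_, fun ν hν μ hμ => isLowerSet_axisSegment ⟨0, hd⟩ s hμ hν,
      card_axisSegment _ _, (sum_axisSegment _ _).symm⟩
  refine le_antisymm (csSup_le ⟨_, mem⟩ ?_) (le_csSup ⟨s ^ 2, ?_⟩ mem) <;>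
  · rintro t ⟨Λ, hΛ, rfl, rfl⟩
    exact sum_prod_two_mul_add_one_le_card_sq fun ν μ hμ hν => hΛ ν hν μ hμ

theorem KL_sharp_bounds_general (d s : ℕ) (hd : 1 ≤ d) :
    (s : ℝ) ^ 2 / 4 ≤ (KL d s : ℝ) ∧ KL d s ≤ s ^ 2 := by
  rw [KL_eq_sq hd]
  push_cast
  exact ⟨by linarith [sq_nonneg (s : ℝ)], le_rfl⟩

theorem KL_sharp_bounds (d s : ℕ) (hd : 1 ≤ d) (hs2 : 2 ≤ s) (hs : s ≤ 2 ^ (d + 1)) :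
    (s : ℝ) ^ 2 / 4 ≤ (KL d s : ℝ) ∧ KL d s ≤ s ^ 2 :=
  KL_sharp_bounds_general d s hd
end
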